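/- Let d ≥ 3 and p > 1 with d > 2p/(p-1) (equivalently p > d/(d-2)). Then χ_{d,p} = inf{ (1/2)‖∇ψ‖₂² : ψ ∈ H¹(ℝ^d), ‖ψ‖₂ = 1 = ‖ψ‖_{2p} } = 0. -/

import Mathlib

/-!
The quantity `½ ‖∇φ‖₂² (‖φ‖₂²)^(2p/(d(p-1)) - 1) (‖φ‖_{2p}^{2p})^(-2/(d(p-1)))` is invariant under
`φ ↦ a φ(c ·)`, and choosing `a` and `c` to normalise both constraints shows that it is a value of
the energy on the constraint set. For the profiles `(1 + |x|²)^(-s/2)` with `s ↓ d/2` the gradient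
and `L^{2p}` terms stay bounded while `‖φ‖₂² ≳ 1/(2s - d)` blows up. Since `d > 2p/(p-1)` makes
the exponent of `‖φ‖₂²` negative, these values tend to `0`.
-/

open MeasureTheory

noncomputable def gradNormSq {d : ℕ} (ψ : (Fin d → ℝ) → ℝ) (x : Fin d → ℝ) : ℝ :=
  ∑ i, (fderiv ℝ ψ x (Pi.single i 1)) ^ 2

def chiSet (d : ℕ) (p : ℝ) : Set ℝ :=
  {E | ∃ ψ : (Fin d → ℝ) → ℝ, Differentiable ℝ ψ ∧
    Integrable (fun x => ψ x ^ 2) ∧ Integrable (gradNormSq ψ) ∧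
    Integrable (fun x => |ψ x| ^ (2 * p)) ∧
    (∫ x, ψ x ^ 2) = 1 ∧ (∫ x, |ψ x| ^ (2 * p)) = 1 ∧
    E = (1 / 2) * ∫ x, gradNormSq ψ x}

open Real Set Filter Topology

lemma gradNormSq_nonneg {d : ℕ} (ψ : (Fin d → ℝ) → ℝ) (x : Fin d → ℝ) : 0 ≤ gradNormSq ψ x :=
  Finset.sum_nonneg fun _ _ => sq_nonneg _

lemma nonneg_of_mem_chiSet {d : ℕ} {p E : ℝ} (hE : E ∈ chiSet d p) : 0 ≤ E := by
  obtain ⟨ψ, -, -, -, -, -, -, rfl⟩ := hE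
  exact mul_nonneg (by norm_num) (integral_nonneg (gradNormSq_nonneg ψ))

lemma gradNormSq_const_mul_comp_smul {d : ℕ} {φ : (Fin d → ℝ) → ℝ} (a c : ℝ) {x : Fin d → ℝ}
    (hφ : DifferentiableAt ℝ φ (c • x)) :
    gradNormSq (fun x => a * φ (c • x)) x = (a * c) ^ 2 * gradNormSq φ (c • x) := by
  have hcomp : DifferentiableAt ℝ (fun x => φ (c • x)) x :=
    hφ.comp x (differentiableAt_id.const_smul c)
  simp only [gradNormSq, fderiv_const_mul hcomp, fderiv_comp_smul, Finset.mul_sum]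
  congr 1 with i
  simp only [FunLike.coe_smul, Pi.smul_apply, smul_eq_mul]
  ring

lemma integral_comp_smul_of_nonneg_fin {d : ℕ} (f : (Fin d → ℝ) → ℝ) {c : ℝ} (hc : 0 ≤ c) :
    ∫ x, f (c • x) = (c ^ d)⁻¹ * ∫ x, f x := by
  simpa using Measure.integral_comp_smul_of_nonneg volume f c (hR := hc)

theorem mem_chiSet_of_integrable {d : ℕ} (hd : d ≠ 0) {p : ℝ} (hp : 1 < p)
    {φ : (Fin d → ℝ) → ℝ} (hφ : Differentiable ℝ φ) (hsq : Integrable fun x => φ x ^ 2)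
    (hgrad : Integrable (gradNormSq φ)) (hpow : Integrable fun x => |φ x| ^ (2 * p))
    (hA : 0 < ∫ x, φ x ^ 2) (hB : 0 < ∫ x, |φ x| ^ (2 * p)) :
    (1 / 2) * (∫ x, gradNormSq φ x) * (∫ x, φ x ^ 2) ^ (2 * p / (d * (p - 1)) - 1)
      * (∫ x, |φ x| ^ (2 * p)) ^ (-(2 / (d * (p - 1)))) ∈ chiSet d p := by
  set A := ∫ x, φ x ^ 2
  set B := ∫ x, |φ x| ^ (2 * p)
  have hp1 : p - 1 ≠ 0 := by linarith
  have hd' : (d : ℝ) ≠ 0 := Nat.cast_ne_zero.mpr hd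
  -- amplitude `exp u` and dilation `exp v`: in `log` coordinates both normalisations are linear
  set u := (log A - log B) / (2 * (p - 1)) with hu
  set v := (p * log A - log B) / (d * (p - 1)) with hv
  have hexp_d : exp v ^ d = exp (d * v) := (exp_nat_mul v d).symm
  have hsq_eq : (fun x => (exp u * φ (exp v • x)) ^ 2)
      = fun x => exp (2 * u) * φ (exp v • x) ^ 2 := by
    ext x; rw [mul_pow, ← exp_nat_mul]; norm_num
  have hpow_eq : (fun x => |exp u * φ (exp v • x)| ^ (2 * p))
      = fun x => exp (u * (2 * p)) * |φ (exp v • x)| ^ (2 * p) := by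
    ext x
    rw [abs_mul, abs_of_pos (exp_pos u), mul_rpow (exp_pos u).le (abs_nonneg _), exp_mul]
  have hgrad_eq : gradNormSq (fun x => exp u * φ (exp v • x))
      = fun x => exp (2 * u + 2 * v) * gradNormSq φ (exp v • x) := by
    ext x
    rw [gradNormSq_const_mul_comp_smul _ _ (hφ _), mul_pow, ← exp_nat_mul, ← exp_nat_mul,
      ← exp_add]
    norm_num
  refine ⟨fun x => exp u * φ (exp v • x), by fun_prop, ?_, ?_, ?_, ?_, ?_, ?_⟩
  · rw [hsq_eq]; exact (hsq.comp_smul (exp_pos v).ne').const_mul _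
  · rw [hgrad_eq]; exact (hgrad.comp_smul (exp_pos v).ne').const_mul _
  · rw [hpow_eq]; exact (hpow.comp_smul (exp_pos v).ne').const_mul _
  · rw [hsq_eq, integral_const_mul,
      integral_comp_smul_of_nonneg_fin (fun y => φ y ^ 2) (exp_pos v).le, hexp_d,
      show (∫ x, φ x ^ 2) = A from rfl, ← exp_log hA, ← exp_neg, ← exp_add, ← exp_add,
      exp_eq_one_iff, hu, hv]
    field_simp
    ring
  · rw [hpow_eq, integral_const_mul,
      integral_comp_smul_of_nonneg_fin (fun y => |φ y| ^ (2 * p)) (exp_pos v).le, hexp_d,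
      show (∫ x, |φ x| ^ (2 * p)) = B from rfl, ← exp_log hB, ← exp_neg, ← exp_add, ← exp_add,
      exp_eq_one_iff, hu, hv]
    field_simp
    ring
  · have hfactor : exp (2 * u + 2 * v) * (exp (d * v))⁻¹
        = A ^ (2 * p / (d * (p - 1)) - 1) * B ^ (-(2 / (d * (p - 1)))) := by
      rw [rpow_def_of_pos hA, rpow_def_of_pos hB, ← exp_neg, ← exp_add, ← exp_add, hu, hv]
      congr 1
      field_simp
      ring
    rw [hgrad_eq, integral_const_mul,
      integral_comp_smul_of_nonneg_fin (gradNormSq φ) (exp_pos v).le, hexp_d,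
      mul_assoc _ (A ^ _), ← hfactor]
    ring

-- `|x|²` for the Euclidean norm: the norm on `Fin d → ℝ` is the sup norm.
noncomputable def sumSq {d : ℕ} (x : Fin d → ℝ) : ℝ := ∑ i, x i ^ 2

lemma sumSq_nonneg {d : ℕ} (x : Fin d → ℝ) : 0 ≤ sumSq x :=
  Finset.sum_nonneg fun _ _ => sq_nonneg _

lemma one_add_sumSq_pos {d : ℕ} (x : Fin d → ℝ) : 0 < 1 + sumSq x := by
  linarith [sumSq_nonneg x]

@[fun_prop]
lemma continuous_sumSq {d : ℕ} : Continuous (sumSq (d := d)) := by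
  unfold sumSq; fun_prop

lemma norm_sq_le_sumSq {d : ℕ} (x : Fin d → ℝ) : ‖x‖ ^ 2 ≤ sumSq x := by
  have hx : ‖x‖ ≤ √(sumSq x) := (pi_norm_le_iff_of_nonneg (sqrt_nonneg _)).mpr fun i =>
    abs_le_sqrt (Finset.single_le_sum (f := fun j => x j ^ 2) (fun j _ => sq_nonneg _)
      (Finset.mem_univ i))
  simpa [sq_sqrt (sumSq_nonneg x)] using pow_le_pow_left₀ (norm_nonneg x) hx 2

lemma sumSq_le_card_mul_norm_sq {d : ℕ} (x : Fin d → ℝ) : sumSq x ≤ d * ‖x‖ ^ 2 := by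
  calc sumSq x ≤ ∑ _i : Fin d, ‖x‖ ^ 2 :=
        Finset.sum_le_sum fun i _ => by
          simpa [sq_abs] using pow_le_pow_left₀ (abs_nonneg _) (norm_le_pi_norm x i) 2
    _ = d * ‖x‖ ^ 2 := by simp

lemma hasFDerivAt_sumSq {d : ℕ} (x : Fin d → ℝ) :
    HasFDerivAt sumSq
      (∑ i, (2 * x i) • (ContinuousLinearMap.proj i : (Fin d → ℝ) →L[ℝ] ℝ)) x := by
  refine HasFDerivAt.fun_sum fun i _ => ?_
  have h := (ContinuousLinearMap.proj i : (Fin d → ℝ) →L[ℝ] ℝ).hasFDerivAt (x := x)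
  simpa [pow_two, two_mul, add_smul] using h.fun_mul h

lemma gradNormSq_comp_sumSq {d : ℕ} {g : ℝ → ℝ} {g' : ℝ} {x : Fin d → ℝ}
    (hg : HasDerivAt g g' (sumSq x)) :
    gradNormSq (fun x => g (sumSq x)) x = 4 * sumSq x * g' ^ 2 := by
  have h : HasFDerivAt (fun x => g (sumSq x)) _ x :=
    hg.comp_hasFDerivAt x (hasFDerivAt_sumSq x)
  rw [gradNormSq, h.fderiv]
  simp only [smul_apply, sum_apply, ContinuousLinearMap.proj_apply, Pi.single_apply, smul_eq_mul,
    mul_ite, mul_one, mul_zero, Finset.sum_ite_eq', Finset.mem_univ, ↓reduceIte, sumSq,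
    Finset.mul_sum, Finset.sum_mul]
  ring_nf

lemma integrable_one_add_norm_sq_rpow_neg {E : Type*} [NormedAddCommGroup E] [NormedSpace ℝ E]
    [FiniteDimensional ℝ E] [MeasurableSpace E] [BorelSpace E]
    (μ : Measure E) [μ.IsAddHaarMeasure] {s : ℝ} (hs : Module.finrank ℝ E < 2 * s) :
    Integrable (fun x => (1 + ‖x‖ ^ 2) ^ (-s)) μ := by
  simpa [neg_div] using integrable_rpow_neg_one_add_norm_sq (μ := μ) hs

lemma le_integral_one_add_norm_sq_rpow_neg {E : Type*} [NormedAddCommGroup E] [NormedSpace ℝ E]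
    [FiniteDimensional ℝ E] [MeasurableSpace E] [BorelSpace E] [Nontrivial E]
    (μ : Measure E) [μ.IsAddHaarMeasure] {s : ℝ} (hs : Module.finrank ℝ E < 2 * s) :
    2 ^ (-s) * (Module.finrank ℝ E * μ.real (Metric.ball 0 1)) / (2 * s - Module.finrank ℝ E)
      ≤ ∫ x, (1 + ‖x‖ ^ 2) ^ (-s) ∂μ := by
  set n := Module.finrank ℝ E
  have hn : 1 ≤ n := Module.finrank_pos
  set f : ℝ → ℝ := fun y => y ^ (n - 1) * (1 + y ^ 2) ^ (-s)
  have hf_int : IntegrableOn f (Ioi 0) := by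
    have h := integrable_one_add_norm_sq_rpow_neg μ hs
    rw [integrable_fun_norm_addHaar μ (f := fun y => (1 + y ^ 2) ^ (-s))] at h
    simpa only [smul_eq_mul] using h
  have hlt : (n : ℝ) - 1 - 2 * s < -1 := by linarith
  -- on `(1, ∞)`, `1 + y² ≤ 2 y²`
  have hf_ge : ∀ y ∈ Ioi (1 : ℝ), 2 ^ (-s) * y ^ ((n : ℝ) - 1 - 2 * s) ≤ f y := by
    intro y (hy : 1 < y)
    have hy0 : 0 < y := one_pos.trans hy
    have hpow : y ^ ((n : ℝ) - 1 - 2 * s) = y ^ (n - 1) * (y ^ 2) ^ (-s) := by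
      rw [← rpow_natCast, ← rpow_natCast, ← rpow_mul hy0.le, ← rpow_add hy0,
        Nat.cast_sub hn]
      push_cast; ring_nf
    rw [hpow, mul_left_comm, ← mul_rpow (by norm_num) (by positivity)]
    refine mul_le_mul_of_nonneg_left
      (rpow_le_rpow_of_nonpos (by positivity) (by nlinarith) (by linarith)) (by positivity)
  have hradial : 2 ^ (-s) / (2 * s - n) ≤ ∫ y in Ioi (0 : ℝ), f y :=
    calc 2 ^ (-s) / (2 * s - n)
        = ∫ y in Ioi (1 : ℝ), 2 ^ (-s) * y ^ ((n : ℝ) - 1 - 2 * s) := by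
          rw [integral_const_mul, integral_Ioi_rpow_of_lt hlt one_pos, one_rpow,
            show (n : ℝ) - 1 - 2 * s + 1 = -(2 * s - n) by ring]
          field_simp
      _ ≤ ∫ y in Ioi (1 : ℝ), f y :=
          setIntegral_mono_on ((integrableOn_Ioi_rpow_of_lt hlt one_pos).const_mul _)
            (hf_int.mono_set (Ioi_subset_Ioi zero_le_one)) measurableSet_Ioi hf_ge
      _ ≤ ∫ y in Ioi (0 : ℝ), f y :=
          setIntegral_mono_set hf_int
            (ae_restrict_of_forall_mem measurableSet_Ioi fun y (hy : 0 < y) => by positivity)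
            (Ioi_subset_Ioi zero_le_one).eventuallyLE
  rw [integral_fun_norm_addHaar μ (fun y => (1 + y ^ 2) ^ (-s))]
  simp only [nsmul_eq_mul, smul_eq_mul]
  calc 2 ^ (-s) * (n * μ.real (Metric.ball 0 1)) / (2 * s - n)
      = n * μ.real (Metric.ball 0 1) * (2 ^ (-s) / (2 * s - n)) := by ring
    _ ≤ n * μ.real (Metric.ball 0 1) * ∫ y in Ioi (0 : ℝ), f y :=
        mul_le_mul_of_nonneg_left hradial (by positivity)
    _ = _ := by ring

noncomputable def bracketIntegral (d : ℕ) (s : ℝ) : ℝ :=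
  ∫ x : Fin d → ℝ, (1 + sumSq x) ^ (-s)

section BracketIntegral

variable {d : ℕ} {s : ℝ}

@[fun_prop]
lemma continuous_one_add_sumSq_rpow (s : ℝ) :
    Continuous fun x : Fin d → ℝ => (1 + sumSq x) ^ s :=
  (by fun_prop : Continuous fun x : Fin d → ℝ => 1 + sumSq x).rpow_const
    fun x => Or.inl (one_add_sumSq_pos x).ne'

lemma one_add_sumSq_rpow_neg_le (hs : 0 ≤ s) (x : Fin d → ℝ) :
    (1 + sumSq x) ^ (-s) ≤ (1 + ‖x‖ ^ 2) ^ (-s) :=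
  rpow_le_rpow_of_nonpos (by positivity) (by linarith [norm_sq_le_sumSq x]) (by linarith)

lemma integrable_one_add_sumSq_rpow_neg (hs : d < 2 * s) :
    Integrable fun x : Fin d → ℝ => (1 + sumSq x) ^ (-s) := by
  have h := integrable_one_add_norm_sq_rpow_neg (volume : Measure (Fin d → ℝ)) (s := s)
    (by simpa using hs)
  refine h.mono' (continuous_one_add_sumSq_rpow _).aestronglyMeasurable (ae_of_all _ fun x => ?_)
  rw [norm_of_nonneg (rpow_nonneg (one_add_sumSq_pos x).le _)]
  exact one_add_sumSq_rpow_neg_le (by linarith [(d.cast_nonneg : (0 : ℝ) ≤ d)]) x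

lemma bracketIntegral_pos (hs : d < 2 * s) : 0 < bracketIntegral d s := by
  refine integral_pos_of_integrable_nonneg_nonzero (x := 0) (by fun_prop)
    (integrable_one_add_sumSq_rpow_neg hs)
    (fun x => (rpow_pos_of_pos (one_add_sumSq_pos x) _).le)
    (rpow_pos_of_pos (one_add_sumSq_pos 0) _).ne'

lemma bracketIntegral_le_of_le {s' : ℝ} (hs : d < 2 * s) (hss' : s ≤ s') :
    bracketIntegral d s' ≤ bracketIntegral d s :=
  integral_mono (integrable_one_add_sumSq_rpow_neg (by linarith))
    (integrable_one_add_sumSq_rpow_neg hs) fun x =>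
      rpow_le_rpow_of_exponent_le (by linarith [sumSq_nonneg x]) (neg_le_neg hss')

lemma le_bracketIntegral (hd : d ≠ 0) (hs : d < 2 * s) :
    (2 * (1 + d)) ^ (-s) * (d * volume.real (Metric.ball (0 : Fin d → ℝ) 1)) / (2 * s - d)
      ≤ bracketIntegral d s := by
  have : NeZero d := ⟨hd⟩
  have hs0 : 0 ≤ s := by linarith [(d.cast_nonneg : (0 : ℝ) ≤ d)]
  have h := le_integral_one_add_norm_sq_rpow_neg (volume : Measure (Fin d → ℝ)) (s := s)
    (by simpa using hs)
  simp only [Module.finrank_fin_fun] at h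
  have hcompare : ∀ x : Fin d → ℝ,
      (1 + d) ^ (-s) * (1 + ‖x‖ ^ 2) ^ (-s) ≤ (1 + sumSq x) ^ (-s) := by
    intro x
    rw [← mul_rpow (by positivity) (by positivity)]
    refine rpow_le_rpow_of_nonpos (one_add_sumSq_pos x) ?_ (by linarith)
    nlinarith [sumSq_le_card_mul_norm_sq x, sq_nonneg ‖x‖, (d.cast_nonneg : (0 : ℝ) ≤ d)]
  calc (2 * (1 + d)) ^ (-s) * (d * volume.real (Metric.ball (0 : Fin d → ℝ) 1)) / (2 * s - d)
      = (1 + d) ^ (-s) * (2 ^ (-s) * (d * volume.real (Metric.ball (0 : Fin d → ℝ) 1))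
          / (2 * s - d)) := by
        rw [mul_rpow (by norm_num) (by positivity)]; ring
    _ ≤ (1 + d) ^ (-s) * ∫ x : Fin d → ℝ, (1 + ‖x‖ ^ 2) ^ (-s) :=
        mul_le_mul_of_nonneg_left h (by positivity)
    _ = ∫ x : Fin d → ℝ, (1 + d) ^ (-s) * (1 + ‖x‖ ^ 2) ^ (-s) := (integral_const_mul _ _).symm
    _ ≤ bracketIntegral d s :=
        integral_mono ((integrable_one_add_norm_sq_rpow_neg _ (by simpa using hs)).const_mul _)
          (integrable_one_add_sumSq_rpow_neg hs) hcompare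

lemma tendsto_bracketIntegral_atTop (hd : d ≠ 0) :
    Tendsto (bracketIntegral d) (𝓝[>] (d / 2)) atTop := by
  set c : ℝ → ℝ :=
    fun s => (2 * (1 + d)) ^ (-s) * (d * volume.real (Metric.ball (0 : Fin d → ℝ) 1))
  have hc : Tendsto c (𝓝[>] (d / 2)) (𝓝 (c (d / 2))) := by
    refine (Continuous.tendsto ?_ _).mono_left nhdsWithin_le_nhds
    exact (continuous_const.rpow continuous_neg fun _ => Or.inl (by positivity)).mul
      continuous_const
  have hc0 : 0 < c (d / 2) := by
    have : NeZero d := ⟨hd⟩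
    have hball : 0 < volume.real (Metric.ball (0 : Fin d → ℝ) 1) :=
      ENNReal.toReal_pos (Metric.measure_ball_pos _ _ one_pos).ne' measure_ball_lt_top.ne
    have : (0 : ℝ) < d := by positivity
    positivity
  have hgap : Tendsto (fun s : ℝ => 2 * s - d) (𝓝[>] (d / 2)) (𝓝[>] 0) := by
    refine tendsto_nhdsWithin_iff.mpr ⟨?_, ?_⟩
    · refine (Continuous.tendsto' (by fun_prop) _ _ ?_).mono_left nhdsWithin_le_nhds
      ring
    · filter_upwards [self_mem_nhdsWithin] with s (hs : (d : ℝ) / 2 < s)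
      show 0 < 2 * s - d
      linarith
  refine tendsto_atTop_mono' _ ?_ (hc.pos_mul_atTop hc0 (tendsto_inv_nhdsGT_zero.comp hgap))
  filter_upwards [self_mem_nhdsWithin] with s (hs : (d : ℝ) / 2 < s)
  simpa [c, div_eq_mul_inv] using le_bracketIntegral hd (by linarith : (d : ℝ) < 2 * s)

end BracketIntegral

noncomputable def bracketProfile {d : ℕ} (s : ℝ) (x : Fin d → ℝ) : ℝ :=
  (1 + sumSq x) ^ (-(s / 2))

section BracketProfile

variable {d : ℕ} {s : ℝ}

lemma hasDerivAt_one_add_rpow (a : ℝ) {y : ℝ} (hy : 0 < 1 + y) :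
    HasDerivAt (fun y => (1 + y) ^ a) (a * (1 + y) ^ (a - 1)) y := by
  simpa using ((hasDerivAt_id y).const_add 1).rpow_const (p := a) (Or.inl hy.ne')

lemma differentiable_bracketProfile (s : ℝ) : Differentiable ℝ (bracketProfile (d := d) s) :=
  fun x => ((hasDerivAt_one_add_rpow _ (one_add_sumSq_pos x)).comp_hasFDerivAt x
    (hasFDerivAt_sumSq x)).differentiableAt

lemma bracketProfile_sq (x : Fin d → ℝ) : bracketProfile s x ^ 2 = (1 + sumSq x) ^ (-s) := by
  rw [bracketProfile, ← rpow_natCast, ← rpow_mul (one_add_sumSq_pos x).le]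
  ring_nf

lemma abs_bracketProfile_rpow (p : ℝ) (x : Fin d → ℝ) :
    |bracketProfile s x| ^ (2 * p) = (1 + sumSq x) ^ (-(p * s)) := by
  rw [bracketProfile, abs_of_pos (rpow_pos_of_pos (one_add_sumSq_pos x) _),
    ← rpow_mul (one_add_sumSq_pos x).le]
  ring_nf

lemma gradNormSq_bracketProfile (x : Fin d → ℝ) :
    gradNormSq (bracketProfile s) x = s ^ 2 * sumSq x * (1 + sumSq x) ^ (-s - 2) := by
  have hx := one_add_sumSq_pos x
  rw [show bracketProfile s = fun x : Fin d → ℝ => (1 + sumSq x) ^ (-(s / 2)) from rfl,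
    gradNormSq_comp_sumSq (hasDerivAt_one_add_rpow _ hx), mul_pow,
    ← rpow_natCast ((1 + sumSq x) ^ _) 2, ← rpow_mul hx.le]
  ring_nf

lemma gradNormSq_bracketProfile_le (x : Fin d → ℝ) :
    gradNormSq (bracketProfile s) x ≤ s ^ 2 * (1 + sumSq x) ^ (-(s + 1)) := by
  have hx := one_add_sumSq_pos x
  rw [gradNormSq_bracketProfile, mul_assoc]
  gcongr
  calc sumSq x * (1 + sumSq x) ^ (-s - 2) ≤ (1 + sumSq x) * (1 + sumSq x) ^ (-s - 2) := by
        gcongr; linarith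
    _ = (1 + sumSq x) ^ (-(s + 1)) := by
        rw [mul_comm, ← rpow_add_one hx.ne']; ring_nf

lemma integrable_gradNormSq_bracketProfile (hs : d < 2 * s) :
    Integrable (gradNormSq (bracketProfile (d := d) s)) := by
  refine ((integrable_one_add_sumSq_rpow_neg (s := s + 1) (by linarith)).const_mul (s ^ 2)).mono'
    ?_ (ae_of_all _ fun x => ?_)
  · rw [show gradNormSq (bracketProfile (d := d) s) = _ from funext gradNormSq_bracketProfile]
    exact Continuous.aestronglyMeasurable (by fun_prop)
  · rw [norm_of_nonneg (gradNormSq_nonneg _ x)]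
    exact gradNormSq_bracketProfile_le x

lemma integral_gradNormSq_bracketProfile_le (hs : d < 2 * s) :
    ∫ x, gradNormSq (bracketProfile (d := d) s) x ≤ s ^ 2 * bracketIntegral d (s + 1) := by
  rw [bracketIntegral, ← integral_const_mul]
  exact integral_mono (integrable_gradNormSq_bracketProfile hs)
    ((integrable_one_add_sumSq_rpow_neg (by linarith)).const_mul _) gradNormSq_bracketProfile_le

end BracketProfile

noncomputable def bracketEnergy (d : ℕ) (p s : ℝ) : ℝ :=
  (1 / 2) * (∫ x, gradNormSq (bracketProfile (d := d) s) x)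
    * bracketIntegral d s ^ (2 * p / (d * (p - 1)) - 1)
    * bracketIntegral d (p * s) ^ (-(2 / (d * (p - 1))))

section BracketEnergy

variable {d : ℕ} {p s : ℝ}

lemma bracketEnergy_mem_chiSet (hd : d ≠ 0) (hp : 1 < p) (hs : d < 2 * s) :
    bracketEnergy d p s ∈ chiSet d p := by
  have hps : d < 2 * (p * s) := by nlinarith [(d.cast_nonneg : (0 : ℝ) ≤ d)]
  have hsq : (fun x => bracketProfile (d := d) s x ^ 2) = fun x => (1 + sumSq x) ^ (-s) :=
    funext bracketProfile_sq
  have hpow : (fun x => |bracketProfile (d := d) s x| ^ (2 * p))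
      = fun x => (1 + sumSq x) ^ (-(p * s)) :=
    funext (abs_bracketProfile_rpow p)
  have h := mem_chiSet_of_integrable hd hp (differentiable_bracketProfile s)
    (by rw [hsq]; exact integrable_one_add_sumSq_rpow_neg hs)
    (integrable_gradNormSq_bracketProfile hs)
    (by rw [hpow]; exact integrable_one_add_sumSq_rpow_neg hps)
    (by rw [hsq]; exact bracketIntegral_pos hs) (by rw [hpow]; exact bracketIntegral_pos hps)
  rwa [hsq, hpow] at h

lemma tendsto_bracketEnergy (hd : d ≠ 0) (hp : 1 < p) (hpd : 2 * p / (d * (p - 1)) < 1) :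
    Tendsto (bracketEnergy d p) (𝓝[>] (d / 2)) (𝓝 0) := by
  have hβ : 0 ≤ 2 / (d * (p - 1)) := div_nonneg zero_le_two (by
    nlinarith [(d.cast_nonneg : (0 : ℝ) ≤ d)])
  set S : ℝ := d / 2 + 1 with hS
  set M : ℝ := (1 / 2) * (S ^ 2 * bracketIntegral d S)
    * bracketIntegral d (p * S) ^ (-(2 / (d * (p - 1))))
  have hlim : Tendsto (fun s => M * bracketIntegral d s ^ (-(1 - 2 * p / (d * (p - 1)))))
      (𝓝[>] (d / 2)) (𝓝 0) := by
    have hγ : 0 < 1 - 2 * p / (d * (p - 1)) := by linarith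
    have h := ((tendsto_rpow_neg_atTop hγ).comp (tendsto_bracketIntegral_atTop hd)).const_mul M
    rwa [mul_zero] at h
  refine tendsto_of_tendsto_of_tendsto_of_le_of_le' tendsto_const_nhds hlim ?_ ?_
  · filter_upwards [self_mem_nhdsWithin] with s (hs : (d : ℝ) / 2 < s)
    exact nonneg_of_mem_chiSet (bracketEnergy_mem_chiSet hd hp (by linarith))
  · filter_upwards [self_mem_nhdsWithin, Ioc_mem_nhdsGT (show (d : ℝ) / 2 < S by linarith)]
      with s (hs : (d : ℝ) / 2 < s) hsS
    have hps : d < 2 * (p * s) := by nlinarith [(d.cast_nonneg : (0 : ℝ) ≤ d)]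
    have hgrad : ∫ x, gradNormSq (bracketProfile (d := d) s) x ≤ S ^ 2 * bracketIntegral d S :=
      (integral_gradNormSq_bracketProfile_le (by linarith)).trans (by
        gcongr
        · exact (bracketIntegral_pos (by linarith)).le
        · linarith
        · linarith [hsS.2]
        · exact bracketIntegral_le_of_le (by linarith) (by linarith))
    have hmass : bracketIntegral d (p * s) ^ (-(2 / (d * (p - 1))))
        ≤ bracketIntegral d (p * S) ^ (-(2 / (d * (p - 1)))) :=
      rpow_le_rpow_of_nonpos (bracketIntegral_pos (by nlinarith [hsS.2]))
        (bracketIntegral_le_of_le hps (by nlinarith [hsS.2])) (by linarith)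
    calc bracketEnergy d p s
        ≤ (1 / 2) * (S ^ 2 * bracketIntegral d S)
          * bracketIntegral d s ^ (2 * p / (d * (p - 1)) - 1)
          * bracketIntegral d (p * S) ^ (-(2 / (d * (p - 1)))) := by
          have hS0 := bracketIntegral_pos (d := d) (s := S) (by linarith)
          have := (rpow_pos_of_pos (bracketIntegral_pos (d := d) (s := s) (by linarith))
            (2 * p / (d * (p - 1)) - 1)).le
          unfold bracketEnergy
          gcongr
          exact (rpow_pos_of_pos (bracketIntegral_pos hps) _).le
      _ = M * bracketIntegral d s ^ (-(1 - 2 * p / (d * (p - 1)))) := by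
          simp only [M, neg_sub]; ring

end BracketEnergy

theorem chi_eq_zero_general (d : ℕ) (p : ℝ) (hp : 1 < p)
    (hpd : (d : ℝ) > 2 * p / (p - 1)) :
    sInf (chiSet d p) = 0 := by
  have hd : (0 : ℝ) < d := lt_trans (div_pos (by linarith) (by linarith)) hpd
  have hd0 : d ≠ 0 := by exact_mod_cast hd.ne'
  have hpd' : 2 * p / (d * (p - 1)) < 1 := by
    rwa [mul_comm (d : ℝ), ← div_div, div_lt_one hd]
  have hmem : ∀ᶠ s in 𝓝[>] ((d : ℝ) / 2), bracketEnergy d p s ∈ chiSet d p := by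
    filter_upwards [self_mem_nhdsWithin] with s (hs : (d : ℝ) / 2 < s)
    exact bracketEnergy_mem_chiSet hd0 hp (by linarith)
  have hbdd : BddBelow (chiSet d p) := ⟨0, fun _ => nonneg_of_mem_chiSet⟩
  refine le_antisymm (ge_of_tendsto (tendsto_bracketEnergy hd0 hp hpd') ?_) ?_
  · exact hmem.mono fun s hs => csInf_le hbdd hs
  · exact le_csInf ⟨_, hmem.exists.choose_spec⟩ fun _ => nonneg_of_mem_chiSet

/-- For `d ≥ 3` and `p > 1` with `d > 2p/(p-1)` (i.e. `p > d/(d-2)`), `χ_{d,p} = 0`. -/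
theorem chi_eq_zero (d : ℕ) (hd : 3 ≤ d) (p : ℝ) (hp : 1 < p)
    (hpd : (d : ℝ) > 2 * p / (p - 1)) :
    sInf (chiSet d p) = 0 :=
  chi_eq_zero_general d p hp hpd
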